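/- arXiv:1804.10185 — 2 statements merged into one kernel-verified Lean document; each statement's English description precedes it below -/
import Mathlib

section
/- Let A and B be disjoint nonempty finite sets with |A| = M and |B| = N, let A_m ⊆ A and B_n ⊆ B be subsets with |A_m| = m and |B_n| = n, let k, ℓ be natural numbers, and let w : Fin k → ℚ, x : Fin ℓ → ℚ, y ∈ ℚ, z ∈ ℚ be weights. Consider labellings of the complete bipartite graph on A × B with k symmetric colours (weights w) and ℓ+2 directed colours (weights x for the first ℓ, y for colour ℓ+1, z for colour ℓ+2). Then the sum of the weights of those labellings in which the edges of directed colour ℓ+1 define a function f : A_m → B, the edges of directed colour ℓ+2 define a function g : B_n → A, and f and g are nowhere inverses of each other, equals K(m,M,n,N) · y^m · z^n · L_{k,ℓ}(M·N − m − n, w, x). -/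
/-- `L_{k,ℓ}(N, w, x)`, the weighted count of labellings of `N` edges with `k`
symmetric and `ℓ` directed colours; tuples summing to `N` are encoded as
functions `(Fin k ⊕ Fin ℓ) → Fin (N+1)`. -/
def Lkl (k l N : ℕ) (w : Fin k → ℚ) (x : Fin l → ℚ) : ℚ :=
  ∑ d ∈ Finset.univ.filter
      (fun d : (Fin k ⊕ Fin l) → Fin (N + 1) => ∑ s : Fin k ⊕ Fin l, (d s).val = N),
    (Nat.multinomial Finset.univ (fun s => (d s).val) : ℚ) *
      2 ^ (∑ q : Fin l, (d (Sum.inr q)).val) *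
      (∏ p : Fin k, w p ^ (d (Sum.inl p)).val) *
      (∏ q : Fin l, x q ^ (d (Sum.inr q)).val)

/-- `K(m,M,n,N) = ∑_{i=0}^{min(m,n)} (−1)^i C(m,i) C(n,i) (i! · M^{n−i} · N^{m−i})`. -/
def Kfun (m M n N : ℕ) : ℤ :=
  ∑ i ∈ Finset.range (min m n + 1),
    (-1 : ℤ) ^ i * (m.choose i : ℤ) * (n.choose i : ℤ) *
      ((i.factorial : ℤ) * (M : ℤ) ^ (n - i) * (N : ℤ) ^ (m - i))

/-- Two functions `f : A_m → B` and `g : B_n → A` are nowhere inverses of each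
other. -/
def NowhereInverses {α : Type*} {A B : Finset α} (Am Bn : Finset α)
    (f : {a // a ∈ Am} → {b // b ∈ B}) (g : {b // b ∈ Bn} → {a // a ∈ A}) : Prop :=
  (∀ (u : {a // a ∈ Am}) (h : (f u).1 ∈ Bn), (g ⟨(f u).1, h⟩).1 ≠ u.1) ∧
  (∀ (v : {b // b ∈ Bn}) (h : (g v).1 ∈ Am), (f ⟨(g v).1, h⟩).1 ≠ v.1)

/-- The relation `R_q` defined by the directed colour `q` of a labelling `c` of
the complete bipartite graph on `A × B`: the edge `{a,b}` labelled with `(q, v)`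
where `v` is one of its endpoints contributes the pair `(u, v)` with `u` the
other endpoint.  Orientation `false` points to the `B`-endpoint, `true` to the
`A`-endpoint. -/
def RelOf {α : Type*} {A B : Finset α} {k l : ℕ}
    (c : {a // a ∈ A} × {b // b ∈ B} → Fin k ⊕ (Fin l × Bool)) (q : Fin l)
    (u v : α) : Prop :=
  (∃ (a : {a // a ∈ A}) (b : {b // b ∈ B}),
      c (a, b) = Sum.inr (q, false) ∧ u = a.1 ∧ v = b.1) ∨
  (∃ (a : {a // a ∈ A}) (b : {b // b ∈ B}),
      c (a, b) = Sum.inr (q, true) ∧ u = b.1 ∧ v = a.1)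

/-- The edges of directed colour `q` define the function `f : S → T`:
the relation `R_q` is exactly the graph of `f`, with domain exactly `S`. -/
def DefinesFun {α : Type*} {A B : Finset α} {k l : ℕ}
    (c : {a // a ∈ A} × {b // b ∈ B} → Fin k ⊕ (Fin l × Bool)) (q : Fin l)
    {S T : Finset α} (f : {a // a ∈ S} → {b // b ∈ T}) : Prop :=
  ∀ u v : α, RelOf c q u v ↔ ∃ hu : u ∈ S, (f ⟨u, hu⟩).1 = v

open Finset

open Finset

lemma sum_prod_indicator {ι β γ : Type*} [Fintype ι] [Fintype β] [Fintype γ]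
    [DecidableEq ι] [DecidableEq β] [DecidableEq γ]
    (φ : γ → ι) (b : γ → β) (hb : Function.Injective b) :
    ∑ f : ι → β, ∏ v : γ, (if f (φ v) = b v then (1 : ℚ) else 0) =
      if Function.Injective φ then
        (Fintype.card β : ℚ) ^ (Fintype.card ι - Fintype.card γ) else 0 := by
  classical
  by_cases hφ : Function.Injective φ
  · rw [if_pos hφ]
    have key : ∀ f : ι → β, (∏ v : γ, if f (φ v) = b v then (1:ℚ) else 0)
        = ∏ i : ι, ∏ v ∈ univ.filter (fun v => φ v = i),
            (if f i = b v then (1:ℚ) else 0) := by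
      intro f
      rw [← Finset.prod_fiberwise univ φ (fun v => if f (φ v) = b v then (1:ℚ) else 0)]
      refine Finset.prod_congr rfl fun i _ => Finset.prod_congr rfl fun v hv => ?_
      rw [(Finset.mem_filter.1 hv).2]
    simp_rw [key]
    have hswap := Finset.prod_univ_sum (t := fun _ : ι => (univ : Finset β))
      (f := fun i y => ∏ v ∈ univ.filter (fun v => φ v = i), (if y = b v then (1:ℚ) else 0))
    rw [Fintype.piFinset_univ] at hswap
    rw [← hswap]
    have hfib1 : ∀ i, (univ.filter (fun v => φ v = i)).card ≤ 1 := by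
      intro i
      refine Finset.card_le_one.2 fun u hu v hv => hφ ?_
      rw [(mem_filter.1 hu).2, (mem_filter.1 hv).2]
    have he : ∀ i : ι,
        (∑ y : β, ∏ v ∈ univ.filter (fun v => φ v = i), (if y = b v then (1:ℚ) else 0))
        = if (univ.filter (fun v => φ v = i)) = ∅ then (Fintype.card β : ℚ) else 1 := by
      intro i
      by_cases hi : (univ.filter (fun v => φ v = i)) = ∅
      · rw [if_pos hi, hi]
        simp [Finset.card_univ]
      · rw [if_neg hi]
        have hcard : (univ.filter (fun v => φ v = i)).card = 1 := by
          have h1 := hfib1 i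
          have h0 : (univ.filter (fun v => φ v = i)).card ≠ 0 := by
            simpa [Finset.card_eq_zero] using hi
          omega
        obtain ⟨v₀, hv₀⟩ := Finset.card_eq_one.1 hcard
        rw [hv₀]
        simp
    simp_rw [he]
    rw [Finset.prod_ite, Finset.prod_const, Finset.prod_const_one, mul_one]
    congr 1
    have hsum : ∑ i : ι, (univ.filter (fun v => φ v = i)).card = Fintype.card γ := by
      rw [← Finset.card_univ (α := γ)]
      exact (Finset.card_eq_sum_card_fiberwise (fun v _ => Finset.mem_univ (φ v))).symm
    have hcases : ∀ i : ι, (univ.filter (fun v => φ v = i)).card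
        = if (univ.filter (fun v => φ v = i)) = ∅ then 0 else 1 := by
      intro i
      by_cases hi : (univ.filter (fun v => φ v = i)) = ∅
      · simp [hi]
      · have h0 : (univ.filter (fun v => φ v = i)).card ≠ 0 := by
          simpa [Finset.card_eq_zero] using hi
        have h1 := hfib1 i
        rw [if_neg hi]; omega
    have hones : (univ.filter (fun i : ι => ¬ (univ.filter (fun v => φ v = i)) = ∅)).card
        = Fintype.card γ := by
      rw [← hsum, Finset.sum_congr rfl fun i _ => hcases i]
      rw [Finset.sum_ite, Finset.sum_const, Finset.sum_const]
      simp
    have htot := Finset.card_filter_add_card_filter_not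
      (s := (univ : Finset ι)) (p := fun i => (univ.filter (fun v => φ v = i)) = ∅)
    rw [Finset.card_univ] at htot
    omega
  · rw [if_neg hφ]
    refine Finset.sum_eq_zero fun f _ => ?_
    obtain ⟨v, v', hvv', hne⟩ : ∃ v v', φ v = φ v' ∧ v ≠ v' := by
      simpa [Function.Injective] using hφ
    by_cases hfv : f (φ v) = b v
    · refine Finset.prod_eq_zero (Finset.mem_univ v') (if_neg ?_)
      rw [← hvv', hfv]
      exact fun h => hne (hb h)
    · exact Finset.prod_eq_zero (Finset.mem_univ v) (if_neg hfv)

lemma card_injective_functions {γ ι : Type*} [Fintype γ] [Fintype ι]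
    [DecidableEq ι] [DecidableEq γ] :
    (univ.filter (fun φ : γ → ι => Function.Injective φ)).card
      = (Fintype.card ι).descFactorial (Fintype.card γ) := by
  classical
  rw [← Fintype.card_embedding_eq (α := γ) (β := ι),
    ← Fintype.card_congr (Equiv.subtypeInjectiveEquivEmbedding γ ι),
    Fintype.card_subtype]

lemma Lkl_eq_pow' (k l N' : ℕ) (w : Fin k → ℚ) (x : Fin l → ℚ) :
    (∑ d ∈ Finset.univ.filter
      (fun d : (Fin k ⊕ Fin l) → Fin (N' + 1) => ∑ s : Fin k ⊕ Fin l, (d s).val = N'),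
    (Nat.multinomial Finset.univ (fun s => (d s).val) : ℚ) *
      2 ^ (∑ q : Fin l, (d (Sum.inr q)).val) *
      (∏ p : Fin k, w p ^ (d (Sum.inl p)).val) *
      (∏ q : Fin l, x q ^ (d (Sum.inr q)).val))
    = (∑ p, w p + 2 * ∑ q, x q) ^ N' := by
  classical
  have hW : (∑ p, w p + 2 * ∑ q, x q)
      = ∑ s : Fin k ⊕ Fin l, Sum.elim w (fun q => 2 * x q) s := by
    rw [Fintype.sum_sum_type]
    simp [Finset.mul_sum]
  rw [hW, Finset.sum_pow_eq_sum_piAntidiag]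
  refine Finset.sum_nbij' (i := fun d s => (d s : ℕ))
    (j := fun e s => (⟨min (e s) N', by omega⟩ : Fin (N' + 1))) ?_ ?_ ?_ ?_ ?_
  · intro d hd
    simp only [Finset.mem_filter, Finset.mem_univ, true_and] at hd
    simp only [Finset.mem_piAntidiag]
    exact ⟨hd, fun i _ => Finset.mem_univ i⟩
  · intro e he
    simp only [Finset.mem_piAntidiag] at he
    have hle : ∀ s, e s ≤ N' := by
      intro s
      rw [← he.1]
      exact Finset.single_le_sum (f := e) (fun i _ => Nat.zero_le _) (Finset.mem_univ s)
    simp only [Finset.mem_filter, Finset.mem_univ, true_and]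
    calc (∑ s : Fin k ⊕ Fin l, min (e s) N')
        = ∑ s : Fin k ⊕ Fin l, e s := by
          exact Finset.sum_congr rfl fun s _ => min_eq_left (hle s)
      _ = N' := he.1
  · intro d hd
    funext s
    exact Fin.ext (by simp [Nat.min_eq_left (Fin.is_le (d s))])
  · intro e he
    simp only [Finset.mem_piAntidiag] at he
    have hle : ∀ s, e s ≤ N' := by
      intro s
      rw [← he.1]
      exact Finset.single_le_sum (f := e) (fun i _ => Nat.zero_le _) (Finset.mem_univ s)
    funext s
    simp [Nat.min_eq_left (hle s)]
  · intro d hd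
    rw [Fintype.prod_sum_type]
    simp only [Sum.elim_inl, Sum.elim_inr]
    have : ∀ q : Fin l, (2 * x q) ^ (d (Sum.inr q) : ℕ)
        = 2 ^ (d (Sum.inr q) : ℕ) * x q ^ (d (Sum.inr q) : ℕ) := fun q => mul_pow _ _ _
    rw [Finset.prod_congr rfl fun q _ => this q, Finset.prod_mul_distrib,
      Finset.prod_pow_eq_pow_sum]
    ring

lemma fin_cases3 (l : ℕ) (q : Fin (l + 2)) :
    (∃ q' : Fin l, q = q'.castSucc.castSucc) ∨ q = Fin.castSucc (Fin.last l) ∨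
      q = Fin.last (l + 1) := by
  rcases lt_trichotomy (q : ℕ) l with h | h | h
  · exact Or.inl ⟨⟨q, h⟩, by ext; simp⟩
  · exact Or.inr (Or.inl (by ext; simp [h]))
  · refine Or.inr (Or.inr (by ext; simp; omega))

lemma definesF_iff {α : Type*} {A B Am : Finset α} {k l : ℕ}
    (hdisj : Disjoint A B) (hAm : Am ⊆ A)
    (c : {a // a ∈ A} × {b // b ∈ B} → Fin k ⊕ (Fin (l + 2) × Bool))
    (f : {a // a ∈ Am} → {b // b ∈ B}) :
    DefinesFun c (Fin.castSucc (Fin.last l)) f ↔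
      ((∀ (a : {a // a ∈ A}) (b : {b // b ∈ B}),
          (c (a, b) = Sum.inr (Fin.castSucc (Fin.last l), false) ↔
            ∃ h : a.1 ∈ Am, (f ⟨a.1, h⟩).1 = b.1)) ∧
        ∀ (a : {a // a ∈ A}) (b : {b // b ∈ B}),
          c (a, b) ≠ Sum.inr (Fin.castSucc (Fin.last l), true)) := by
  constructor
  · intro hf
    refine ⟨fun a b => ⟨fun hc => ?_, fun h => ?_⟩, fun a b hc => ?_⟩
    · exact (hf a.1 b.1).1 (Or.inl ⟨a, b, hc, rfl, rfl⟩)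
    · have hrel : RelOf c (Fin.castSucc (Fin.last l)) a.1 b.1 := (hf a.1 b.1).2 h
      rcases hrel with ⟨a', b', hc, ha, hb⟩ | ⟨a', b', hc, ha, hb⟩
      · obtain rfl : a' = a := Subtype.ext ha.symm
        obtain rfl : b' = b := Subtype.ext hb.symm
        exact hc
      · have haB : a.1 ∈ B := by rw [ha]; exact b'.2
        exact absurd haB (Finset.disjoint_left.1 hdisj a.2)
    · obtain ⟨hu, -⟩ := (hf b.1 a.1).1 (Or.inr ⟨a, b, hc, rfl, rfl⟩)
      exact absurd b.2 (Finset.disjoint_left.1 hdisj (hAm hu))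
  · rintro ⟨h1, h2⟩ u v
    constructor
    · rintro (⟨a, b, hc, rfl, rfl⟩ | ⟨a, b, hc, -, -⟩)
      · exact (h1 a b).1 hc
      · exact absurd hc (h2 a b)
    · rintro ⟨hu, hv⟩
      exact Or.inl ⟨⟨u, hAm hu⟩, f ⟨u, hu⟩, (h1 _ _).2 ⟨hu, rfl⟩, rfl, hv.symm⟩

lemma definesG_iff {α : Type*} {A B Bn : Finset α} {k l : ℕ}
    (hdisj : Disjoint A B) (hBn : Bn ⊆ B)
    (c : {a // a ∈ A} × {b // b ∈ B} → Fin k ⊕ (Fin (l + 2) × Bool))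
    (g : {b // b ∈ Bn} → {a // a ∈ A}) :
    DefinesFun c (Fin.last (l + 1)) g ↔
      ((∀ (a : {a // a ∈ A}) (b : {b // b ∈ B}),
          (c (a, b) = Sum.inr (Fin.last (l + 1), true) ↔
            ∃ h : b.1 ∈ Bn, (g ⟨b.1, h⟩).1 = a.1)) ∧
        ∀ (a : {a // a ∈ A}) (b : {b // b ∈ B}),
          c (a, b) ≠ Sum.inr (Fin.last (l + 1), false)) := by
  constructor
  · intro hg
    refine ⟨fun a b => ⟨fun hc => ?_, fun h => ?_⟩, fun a b hc => ?_⟩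
    · exact (hg b.1 a.1).1 (Or.inr ⟨a, b, hc, rfl, rfl⟩)
    · have hrel : RelOf c (Fin.last (l + 1)) b.1 a.1 := (hg b.1 a.1).2 h
      rcases hrel with ⟨a', b', hc, hb, ha⟩ | ⟨a', b', hc, hb, ha⟩
      · have hbA : b.1 ∈ A := by rw [hb]; exact a'.2
        exact absurd hbA (Finset.disjoint_left.1 hdisj.symm b.2)
      · obtain rfl : b' = b := Subtype.ext hb.symm
        obtain rfl : a' = a := Subtype.ext ha.symm
        exact hc
    · obtain ⟨hu, -⟩ := (hg a.1 b.1).1 (Or.inl ⟨a, b, hc, rfl, rfl⟩)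
      exact absurd a.2 (Finset.disjoint_left.1 hdisj.symm (hBn hu))
  · rintro ⟨h1, h2⟩ u v
    constructor
    · rintro (⟨a, b, hc, rfl, rfl⟩ | ⟨a, b, hc, rfl, rfl⟩)
      · exact absurd hc (h2 a b)
      · exact (h1 a b).1 hc
    · rintro ⟨hu, hv⟩
      exact Or.inr ⟨g ⟨u, hu⟩, ⟨u, hBn hu⟩, (h1 _ _).2 ⟨hu, rfl⟩, rfl, hv.symm⟩


set_option maxHeartbeats 1000000 in
open Classical in
lemma card_nowhereInverses {α : Type*} [DecidableEq α]
    (A B Am Bn : Finset α) (M N m n : ℕ)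
    (hAcard : A.card = M) (hBcard : B.card = N)
    (hAm : Am ⊆ A) (hBn : Bn ⊆ B) (hm : Am.card = m) (hn : Bn.card = n) :
    ((Finset.univ.filter
        (fun fg : ({a // a ∈ Am} → {b // b ∈ B}) × ({b // b ∈ Bn} → {a // a ∈ A}) =>
          NowhereInverses Am Bn fg.1 fg.2)).card : ℚ) = (Kfun m M n N : ℚ) := by
  classical
  have hmM : m ≤ M := hm ▸ hAcard ▸ Finset.card_le_card hAm
  have cardU : Fintype.card {a // a ∈ Am} = m := by rw [Fintype.card_coe, hm]
  have cardB : Fintype.card {b // b ∈ B} = N := by rw [Fintype.card_coe, hBcard]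
  have cardVN : Fintype.card {b // b ∈ Bn} = n := by rw [Fintype.card_coe, hn]
  have cardA : Fintype.card {a // a ∈ A} = M := by rw [Fintype.card_coe, hAcard]
  have hNI : ∀ (f : {a // a ∈ Am} → {b // b ∈ B}) (g : {b // b ∈ Bn} → {a // a ∈ A}),
      NowhereInverses Am Bn f g ↔
        ∀ v : {b // b ∈ Bn}, ∀ u : {a // a ∈ Am}, (f u).1 = v.1 → (g v).1 ≠ u.1 := by
    intro f g
    constructor
    · rintro ⟨h1, -⟩ v u hfu hgv
      have hmem : (f u).1 ∈ Bn := by rw [hfu]; exact v.2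
      have heq : (⟨(f u).1, hmem⟩ : {b // b ∈ Bn}) = v := Subtype.ext hfu
      exact h1 u hmem (by rw [heq]; exact hgv)
    · intro H
      constructor
      · intro u h
        exact H ⟨(f u).1, h⟩ u rfl
      · intro v h heq
        exact H v ⟨(g v).1, h⟩ heq rfl
  -- indicator form
  rw [← Finset.sum_boole]
  rw [Fintype.sum_prod_type]
  -- inner sum over g
  have hg : ∀ f : {a // a ∈ Am} → {b // b ∈ B},
      (∑ g : {b // b ∈ Bn} → {a // a ∈ A},
          if NowhereInverses Am Bn f g then (1:ℚ) else 0)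
      = ∏ v : {b // b ∈ Bn},
          ((M : ℚ) - ((univ.filter (fun u : {a // a ∈ Am} => (f u).1 = v.1)).card : ℚ)) := by
    intro f
    rw [Finset.sum_boole]
    have hinj : Function.Injective
        (fun u : {a // a ∈ Am} => (⟨u.1, hAm u.2⟩ : {a // a ∈ A})) :=
      fun u₁ u₂ h => Subtype.ext (congrArg Subtype.val h :)
    have hset : univ.filter (fun g : {b // b ∈ Bn} → {a // a ∈ A} =>
          NowhereInverses Am Bn f g)
        = Fintype.piFinset (fun v => univ.filter
            (fun a : {a // a ∈ A} => ∀ u : {a // a ∈ Am}, (f u).1 = v.1 → a.1 ≠ u.1)) := by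
      ext g
      simp only [Fintype.mem_piFinset, Finset.mem_filter, Finset.mem_univ, true_and]
      exact hNI f g
    rw [hset, Fintype.card_piFinset]
    push_cast
    refine Finset.prod_congr rfl fun v _ => ?_
    have hrw : univ.filter
          (fun a : {a // a ∈ A} => ∀ u : {a // a ∈ Am}, (f u).1 = v.1 → a.1 ≠ u.1)
        = univ \ (univ.filter (fun u : {a // a ∈ Am} => (f u).1 = v.1)).image
            (fun u => (⟨u.1, hAm u.2⟩ : {a // a ∈ A})) := by
      ext a
      simp only [Finset.mem_sdiff, Finset.mem_univ, true_and, Finset.mem_image,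
        Finset.mem_filter]
      constructor
      · rintro h ⟨u, hu, heq⟩
        exact h u hu (by rw [← heq])
      · intro h u hu ha
        exact h ⟨u, hu, Subtype.ext ha.symm⟩
    have hle : (univ.filter (fun u : {a // a ∈ Am} => (f u).1 = v.1)).card ≤ M := by
      calc (univ.filter (fun u : {a // a ∈ Am} => (f u).1 = v.1)).card
          ≤ (univ : Finset {a // a ∈ Am}).card := Finset.card_filter_le _ _
        _ = m := by rw [Finset.card_univ, cardU]
        _ ≤ M := hmM
    rw [hrw, Finset.card_sdiff_of_subset (Finset.subset_univ _),
      Finset.card_image_of_injective _ hinj, Finset.card_univ, cardA,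
      Nat.cast_sub hle]
  simp only [hg]
  -- expand the product
  have hexp : ∀ f : {a // a ∈ Am} → {b // b ∈ B},
      (∏ v : {b // b ∈ Bn},
          ((M : ℚ) - ((univ.filter (fun u : {a // a ∈ Am} => (f u).1 = v.1)).card : ℚ)))
      = ∑ t ∈ (univ : Finset {b // b ∈ Bn}).powerset,
          (-1 : ℚ) ^ t.card *
            (∏ v ∈ t, ((univ.filter (fun u : {a // a ∈ Am} => (f u).1 = v.1)).card : ℚ)) *
            (M : ℚ) ^ (n - t.card) := by
    intro f
    have hpa := Finset.prod_add
      (fun v : {b // b ∈ Bn} =>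
        -(((univ.filter (fun u : {a // a ∈ Am} => (f u).1 = v.1)).card : ℚ)))
      (fun _ : {b // b ∈ Bn} => (M : ℚ)) univ
    have hlhs : (∏ v : {b // b ∈ Bn},
        (-(((univ.filter (fun u : {a // a ∈ Am} => (f u).1 = v.1)).card : ℚ)) + (M:ℚ)))
        = ∏ v : {b // b ∈ Bn},
          ((M : ℚ) - ((univ.filter (fun u : {a // a ∈ Am} => (f u).1 = v.1)).card : ℚ)) :=
      Finset.prod_congr rfl fun v _ => by ring
    rw [← hlhs, hpa]
    refine Finset.sum_congr rfl fun t ht => ?_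
    have h1 : (∏ v ∈ t,
        -(((univ.filter (fun u : {a // a ∈ Am} => (f u).1 = v.1)).card : ℚ)))
        = (-1 : ℚ) ^ t.card *
          ∏ v ∈ t, (((univ.filter (fun u : {a // a ∈ Am} => (f u).1 = v.1)).card : ℚ)) := by
      rw [← Finset.prod_const, ← Finset.prod_mul_distrib]
      exact Finset.prod_congr rfl fun v _ => by ring
    have h2 : (∏ _v ∈ (univ : Finset {b // b ∈ Bn}) \ t, (M : ℚ)) = (M : ℚ) ^ (n - t.card) := by
      rw [Finset.prod_const, Finset.card_sdiff_of_subset (Finset.mem_powerset.1 ht),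
        Finset.card_univ, cardVN]
    rw [h1, h2]
  simp only [hexp]
  rw [Finset.sum_comm]
  -- inner sum over f for fixed t
  have hinner : ∀ t : Finset {b // b ∈ Bn},
      (∑ f : {a // a ∈ Am} → {b // b ∈ B},
          ∏ v ∈ t, ((univ.filter (fun u : {a // a ∈ Am} => (f u).1 = v.1)).card : ℚ))
      = (m.descFactorial t.card : ℚ) * (N : ℚ) ^ (m - t.card) := by
    intro t
    have hd : ∀ (f : {a // a ∈ Am} → {b // b ∈ B}) (v : {b // b ∈ Bn}),
        ((univ.filter (fun u : {a // a ∈ Am} => (f u).1 = v.1)).card : ℚ)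
        = ∑ u : {a // a ∈ Am}, if (f u).1 = v.1 then (1:ℚ) else 0 := by
      intro f v
      rw [Finset.sum_boole]
    have h1 : ∀ f : {a // a ∈ Am} → {b // b ∈ B},
        (∏ v ∈ t, ((univ.filter (fun u : {a // a ∈ Am} => (f u).1 = v.1)).card : ℚ))
        = ∑ φ : {v // v ∈ t} → {a // a ∈ Am},
            ∏ v : {v // v ∈ t}, (if (f (φ v)).1 = v.1.1 then (1:ℚ) else 0) := by
      intro f
      calc (∏ v ∈ t, ((univ.filter (fun u : {a // a ∈ Am} => (f u).1 = v.1)).card : ℚ))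
          = ∏ v : {v // v ∈ t},
              ∑ u ∈ (univ : Finset {a // a ∈ Am}),
                (if (f u).1 = v.1.1 then (1:ℚ) else 0) := by
            rw [← Finset.prod_coe_sort]
            exact Finset.prod_congr rfl fun v _ => hd f v.1
        _ = ∑ φ ∈ Fintype.piFinset (fun _ : {v // v ∈ t} => (univ : Finset {a // a ∈ Am})),
              ∏ v : {v // v ∈ t}, (if (f (φ v)).1 = v.1.1 then (1:ℚ) else 0) :=
            Finset.prod_univ_sum _ _
        _ = _ := by rw [Fintype.piFinset_univ]
    simp only [h1]
    rw [Finset.sum_comm]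
    have h2 : ∀ φ : {v // v ∈ t} → {a // a ∈ Am},
        (∑ f : {a // a ∈ Am} → {b // b ∈ B},
            ∏ v : {v // v ∈ t}, (if (f (φ v)).1 = v.1.1 then (1:ℚ) else 0))
        = if Function.Injective φ then (N : ℚ) ^ (m - t.card) else 0 := by
      intro φ
      have hb : Function.Injective
          (fun v : {v // v ∈ t} => (⟨v.1.1, hBn v.1.2⟩ : {b // b ∈ B})) :=
        fun v₁ v₂ h => Subtype.ext (Subtype.ext (congrArg Subtype.val h :))
      have key := sum_prod_indicator φ
        (fun v : {v // v ∈ t} => (⟨v.1.1, hBn v.1.2⟩ : {b // b ∈ B})) hb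
      rw [cardB, cardU, Fintype.card_coe] at key
      rw [← key]
      refine Finset.sum_congr rfl fun f _ => Finset.prod_congr rfl fun v _ => ?_
      exact if_congr ⟨fun h => Subtype.ext h, fun h => congrArg Subtype.val h⟩ rfl rfl
    rw [Finset.sum_congr rfl fun φ _ => h2 φ]
    rw [← Finset.sum_filter, Finset.sum_const, card_injective_functions,
      cardU, Fintype.card_coe, nsmul_eq_mul]
  -- pull constants and use hinner
  have hstep : ∀ t : Finset {b // b ∈ Bn},
      (∑ f : {a // a ∈ Am} → {b // b ∈ B},
        (-1 : ℚ) ^ t.card *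
          (∏ v ∈ t, ((univ.filter (fun u : {a // a ∈ Am} => (f u).1 = v.1)).card : ℚ)) *
          (M : ℚ) ^ (n - t.card))
      = (-1 : ℚ) ^ t.card * ((m.descFactorial t.card : ℚ) * (N : ℚ) ^ (m - t.card)) *
          (M : ℚ) ^ (n - t.card) := by
    intro t
    calc (∑ f : {a // a ∈ Am} → {b // b ∈ B},
        (-1 : ℚ) ^ t.card *
          (∏ v ∈ t, ((univ.filter (fun u : {a // a ∈ Am} => (f u).1 = v.1)).card : ℚ)) *
          (M : ℚ) ^ (n - t.card))
        = ((-1 : ℚ) ^ t.card * ∑ f : {a // a ∈ Am} → {b // b ∈ B},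
            (∏ v ∈ t, ((univ.filter (fun u : {a // a ∈ Am} => (f u).1 = v.1)).card : ℚ))) *
            (M : ℚ) ^ (n - t.card) := by
          rw [← Finset.sum_mul, ← Finset.mul_sum]
      _ = _ := by rw [hinner t]
  rw [Finset.sum_congr rfl fun t _ => hstep t]
  rw [Finset.sum_powerset]
  have hcardu : (univ : Finset {b // b ∈ Bn}).card = n := by
    rw [Finset.card_univ, cardVN]
  rw [hcardu]
  have hin : ∀ j ∈ Finset.range (n + 1),
      (∑ t ∈ Finset.powersetCard j (univ : Finset {b // b ∈ Bn}),
        (-1:ℚ) ^ t.card * ((m.descFactorial t.card : ℚ) * (N:ℚ) ^ (m - t.card)) *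
          (M:ℚ) ^ (n - t.card))
      = (n.choose j : ℚ) *
          ((-1:ℚ) ^ j * ((m.descFactorial j : ℚ) * (N:ℚ) ^ (m - j)) * (M:ℚ) ^ (n - j)) := by
    intro j _
    have hcongr : ∀ t ∈ Finset.powersetCard j (univ : Finset {b // b ∈ Bn}),
        (-1:ℚ) ^ t.card * ((m.descFactorial t.card : ℚ) * (N:ℚ) ^ (m - t.card)) *
          (M:ℚ) ^ (n - t.card)
        = (-1:ℚ) ^ j * ((m.descFactorial j : ℚ) * (N:ℚ) ^ (m - j)) * (M:ℚ) ^ (n - j) := by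
      intro t ht
      rw [(Finset.mem_powersetCard.1 ht).2]
    rw [Finset.sum_congr rfl hcongr, Finset.sum_const, Finset.card_powersetCard,
      Finset.card_univ, cardVN, nsmul_eq_mul]
  rw [Finset.sum_congr rfl hin]
  have hfinal : ∀ j : ℕ, (n.choose j : ℚ) *
      ((-1:ℚ) ^ j * ((m.descFactorial j : ℚ) * (N:ℚ) ^ (m - j)) * (M:ℚ) ^ (n - j))
      = (((-1 : ℤ) ^ j * (m.choose j : ℤ) * (n.choose j : ℤ) *
          ((j.factorial : ℤ) * (M : ℤ) ^ (n - j) * (N : ℤ) ^ (m - j)) : ℤ) : ℚ) := by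
    intro j
    rw [Nat.descFactorial_eq_factorial_mul_choose]
    push_cast
    ring
  rw [Finset.sum_congr rfl (fun j _ => hfinal j)]
  have hZ : ∑ j ∈ Finset.range (n + 1),
      ((-1 : ℤ) ^ j * (m.choose j : ℤ) * (n.choose j : ℤ) *
        ((j.factorial : ℤ) * (M : ℤ) ^ (n - j) * (N : ℤ) ^ (m - j)))
      = Kfun m M n N := by
    rw [Kfun]
    refine (Finset.sum_subset (Finset.range_subset_range.2 (by omega)) ?_).symm
    intro i hi hni
    simp only [Finset.mem_range] at hi hni
    have hlt : m < i := by omega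
    simp [Nat.choose_eq_zero_of_lt hlt]
  rw [← hZ]
  push_cast
  ring


/-- The embedding of ordinary colours into the colour set with two extra directed colours. -/
def embedCol (k l : ℕ) : (Fin k ⊕ (Fin l × Bool)) → (Fin k ⊕ (Fin (l + 2) × Bool)) :=
  Sum.map (id : Fin k → Fin k)
    (Prod.map (fun q : Fin l => q.castSucc.castSucc) (id : Bool → Bool))

lemma embedCol_inj (k l : ℕ) : Function.Injective (embedCol k l) := by
  refine Function.Injective.sumMap Function.injective_id ?_
  refine Function.Injective.prodMap ?_ Function.injective_id
  exact fun q₁ q₂ h => (Fin.castSucc_injective l) ((Fin.castSucc_injective (l+1)) h)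

lemma embedCol_ne_special {k l : ℕ} (s : Fin k ⊕ (Fin l × Bool)) (o : Bool) :
    embedCol k l s ≠ Sum.inr (Fin.castSucc (Fin.last l), o) ∧
    embedCol k l s ≠ Sum.inr (Fin.last (l + 1), o) := by
  rcases s with p | ⟨q, o'⟩
  · simp [embedCol]
  · have hq := q.isLt
    constructor
    · intro h
      simp only [embedCol, Sum.map_inr, Prod.map_apply, id_eq, Sum.inr.injEq,
        Prod.mk.injEq] at h
      have hval := congrArg Fin.val h.1
      simp at hval
      omega
    · intro h
      simp only [embedCol, Sum.map_inr, Prod.map_apply, id_eq, Sum.inr.injEq,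
        Prod.mk.injEq] at h
      have hval := congrArg Fin.val h.1
      simp at hval
      omega

open Classical in
/-- The set of allowed colours on the edge `p`, given the pair of functions `fg`. -/
noncomputable def edgeColours {α : Type*} (A B Am Bn : Finset α) (k l : ℕ)
    (fg : ({a // a ∈ Am} → {b // b ∈ B}) × ({b // b ∈ Bn} → {a // a ∈ A}))
    (p : {a // a ∈ A} × {b // b ∈ B}) : Finset (Fin k ⊕ (Fin (l + 2) × Bool)) :=
  if ∃ h : p.1.1 ∈ Am, (fg.1 ⟨p.1.1, h⟩).1 = p.2.1 then
    {Sum.inr (Fin.castSucc (Fin.last l), false)}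
  else if ∃ h : p.2.1 ∈ Bn, (fg.2 ⟨p.2.1, h⟩).1 = p.1.1 then
    {Sum.inr (Fin.last (l + 1), true)}
  else Finset.univ.image (embedCol k l)

lemma nowhere_exclusive {α : Type*} {A B Am Bn : Finset α}
    (f : {a // a ∈ Am} → {b // b ∈ B}) (g : {b // b ∈ Bn} → {a // a ∈ A})
    (hni : NowhereInverses Am Bn f g) (a : {a // a ∈ A}) (b : {b // b ∈ B})
    (h1 : ∃ h : a.1 ∈ Am, (f ⟨a.1, h⟩).1 = b.1)
    (h2 : ∃ h : b.1 ∈ Bn, (g ⟨b.1, h⟩).1 = a.1) : False := by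
  obtain ⟨ha, hfa⟩ := h1
  obtain ⟨hb, hgb⟩ := h2
  have hmem : (f ⟨a.1, ha⟩).1 ∈ Bn := by rw [hfa]; exact hb
  refine hni.1 ⟨a.1, ha⟩ hmem ?_
  have heq : (⟨(f ⟨a.1, ha⟩).1, hmem⟩ : {b' // b' ∈ Bn}) = ⟨b.1, hb⟩ := Subtype.ext hfa
  rw [heq]
  exact hgb

open Classical in
lemma edgeColours_facts {α : Type*} (A B Am Bn : Finset α) (k l : ℕ)
    (fg : ({a // a ∈ Am} → {b // b ∈ B}) × ({b // b ∈ Bn} → {a // a ∈ A}))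
    (hni : NowhereInverses Am Bn fg.1 fg.2)
    (c : {a // a ∈ A} × {b // b ∈ B} → Fin k ⊕ (Fin (l + 2) × Bool))
    (hmem : ∀ p, c p ∈ edgeColours A B Am Bn k l fg p) :
    ∀ (a : {a // a ∈ A}) (b : {b // b ∈ B}),
      (c (a, b) = Sum.inr (Fin.castSucc (Fin.last l), false) ↔
        ∃ h : a.1 ∈ Am, (fg.1 ⟨a.1, h⟩).1 = b.1) ∧
      (c (a, b) = Sum.inr (Fin.last (l + 1), true) ↔
        ∃ h : b.1 ∈ Bn, (fg.2 ⟨b.1, h⟩).1 = a.1) ∧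
      c (a, b) ≠ Sum.inr (Fin.castSucc (Fin.last l), true) ∧
      c (a, b) ≠ Sum.inr (Fin.last (l + 1), false) := by
  intro a b
  have hm := hmem (a, b)
  simp only [edgeColours] at hm
  by_cases h1 : ∃ h : a.1 ∈ Am, (fg.1 ⟨a.1, h⟩).1 = b.1
  · rw [if_pos h1, Finset.mem_singleton] at hm
    have hne2 : ¬ ∃ h : b.1 ∈ Bn, (fg.2 ⟨b.1, h⟩).1 = a.1 :=
      fun h2 => nowhere_exclusive fg.1 fg.2 hni a b h1 h2
    refine ⟨⟨fun _ => h1, fun _ => hm⟩, ⟨fun hc => ?_, fun h2 => absurd h2 hne2⟩, ?_, ?_⟩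
    · rw [hm] at hc; simp [Fin.ext_iff] at hc
    · rw [hm]; simp
    · rw [hm]; simp [Fin.ext_iff]
  · rw [if_neg h1] at hm
    by_cases h2 : ∃ h : b.1 ∈ Bn, (fg.2 ⟨b.1, h⟩).1 = a.1
    · rw [if_pos h2, Finset.mem_singleton] at hm
      refine ⟨⟨fun hc => ?_, fun hh => absurd hh h1⟩, ⟨fun _ => h2, fun _ => hm⟩, ?_, ?_⟩
      · rw [hm] at hc; simp [Fin.ext_iff] at hc
      · rw [hm]; simp [Fin.ext_iff]
      · rw [hm]; simp
    · rw [if_neg h2] at hm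
      obtain ⟨s, -, hs⟩ := Finset.mem_image.1 hm
      have hne : ∀ o : Bool, c (a, b) ≠ Sum.inr (Fin.castSucc (Fin.last l), o) ∧
          c (a, b) ≠ Sum.inr (Fin.last (l + 1), o) := by
        intro o
        rw [← hs]
        exact embedCol_ne_special s o
      exact ⟨⟨fun hc => absurd hc (hne false).1, fun hh => absurd hh h1⟩,
        ⟨fun hc => absurd hc (hne true).2, fun hh => absurd hh h2⟩,
        (hne true).1, (hne false).2⟩


lemma Lkl_eq_pow (k l N' : ℕ) (w : Fin k → ℚ) (x : Fin l → ℚ) :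
    Lkl k l N' w x = (∑ p, w p + 2 * ∑ q, x q) ^ N' := Lkl_eq_pow' k l N' w x

set_option maxHeartbeats 2000000 in
open Classical in
/-- Proposition: the weighted number of labellings of the complete bipartite
graph on `A × B` with `k` symmetric and `ℓ+2` directed colours in which colour
`ℓ+1` defines a function `f : A_m → B`, colour `ℓ+2` defines a function
`g : B_n → A`, and `f`, `g` are nowhere inverses of each other, equals
`K(m,M,n,N) · y^m · z^n · L_{k,ℓ}(MN − m − n, w, x)`. -/
theorem weighted_labellings_nowhereInverses {α : Type*} [DecidableEq α]
    (A B Am Bn : Finset α) (M N m n k l : ℕ)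
    (hA : A.Nonempty) (hB : B.Nonempty) (hdisj : Disjoint A B)
    (hAcard : A.card = M) (hBcard : B.card = N)
    (hAm : Am ⊆ A) (hBn : Bn ⊆ B) (hm : Am.card = m) (hn : Bn.card = n)
    (w : Fin k → ℚ) (x : Fin l → ℚ) (y z : ℚ) :
    (∑ c ∈ Finset.univ.filter
        (fun c : {a // a ∈ A} × {b // b ∈ B} → Fin k ⊕ (Fin (l + 2) × Bool) =>
          ∃ (f : {a // a ∈ Am} → {b // b ∈ B}) (g : {b // b ∈ Bn} → {a // a ∈ A}),
            DefinesFun c (Fin.castSucc (Fin.last l)) f ∧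
            DefinesFun c (Fin.last (l + 1)) g ∧
            NowhereInverses Am Bn f g),
      ∏ p : {a // a ∈ A} × {b // b ∈ B},
        Sum.elim w
          (fun qb => (Fin.snoc (Fin.snoc x y) z : Fin (l + 2) → ℚ) qb.1) (c p)) =
      (Kfun m M n N : ℚ) * y ^ m * z ^ n * Lkl k l (M * N - m - n) w x := by
  classical
  -- Step 1: the filtered set of labellings is a disjoint union over nowhere-inverse pairs.
  have hset : (Finset.univ.filter
        (fun c : {a // a ∈ A} × {b // b ∈ B} → Fin k ⊕ (Fin (l + 2) × Bool) =>
          ∃ (f : {a // a ∈ Am} → {b // b ∈ B}) (g : {b // b ∈ Bn} → {a // a ∈ A}),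
            DefinesFun c (Fin.castSucc (Fin.last l)) f ∧
            DefinesFun c (Fin.last (l + 1)) g ∧
            NowhereInverses Am Bn f g)) =
      (Finset.univ.filter
        (fun fg : ({a // a ∈ Am} → {b // b ∈ B}) × ({b // b ∈ Bn} → {a // a ∈ A}) =>
          NowhereInverses Am Bn fg.1 fg.2)).biUnion
        (fun fg => Fintype.piFinset (edgeColours A B Am Bn k l fg)) := by
    ext c
    simp only [Finset.mem_filter, Finset.mem_univ, true_and, Finset.mem_biUnion,
      Fintype.mem_piFinset]
    constructor
    · rintro ⟨f, g, hf, hg, hni⟩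
      obtain ⟨hF1, hF2⟩ := (definesF_iff hdisj hAm c f).1 hf
      obtain ⟨hG1, hG2⟩ := (definesG_iff hdisj hBn c g).1 hg
      refine ⟨(f, g), hni, fun p => ?_⟩
      obtain ⟨a, b⟩ := p
      simp only [edgeColours]
      by_cases h1 : ∃ h : a.1 ∈ Am, (f ⟨a.1, h⟩).1 = b.1
      · rw [if_pos h1, Finset.mem_singleton]
        exact (hF1 a b).2 h1
      · rw [if_neg h1]
        by_cases h2 : ∃ h : b.1 ∈ Bn, (g ⟨b.1, h⟩).1 = a.1
        · rw [if_pos h2, Finset.mem_singleton]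
          exact (hG1 a b).2 h2
        · rw [if_neg h2]
          have hne1 : c (a, b) ≠ Sum.inr (Fin.castSucc (Fin.last l), false) :=
            fun hc => h1 ((hF1 a b).1 hc)
          have hne2 := hF2 a b
          have hne3 : c (a, b) ≠ Sum.inr (Fin.last (l + 1), true) :=
            fun hc => h2 ((hG1 a b).1 hc)
          have hne4 := hG2 a b
          rcases hcp : c (a, b) with p' | ⟨q, o⟩
          · exact Finset.mem_image.2 ⟨Sum.inl p', Finset.mem_univ _, rfl⟩
          · rcases fin_cases3 l q with ⟨q', rfl⟩ | rfl | rfl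
            · exact Finset.mem_image.2 ⟨Sum.inr (q', o), Finset.mem_univ _, rfl⟩
            · cases o
              · exact absurd hcp hne1
              · exact absurd hcp hne2
            · cases o
              · exact absurd hcp hne4
              · exact absurd hcp hne3
    · rintro ⟨⟨f, g⟩, hni, hmem⟩
      have hfacts := edgeColours_facts A B Am Bn k l (f, g) hni c hmem
      refine ⟨f, g, ?_, ?_, hni⟩
      · exact (definesF_iff hdisj hAm c f).2
          ⟨fun a b => (hfacts a b).1, fun a b => (hfacts a b).2.2.1⟩
      · exact (definesG_iff hdisj hBn c g).2
          ⟨fun a b => (hfacts a b).2.1, fun a b => (hfacts a b).2.2.2⟩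
  -- Step 2: pairwise disjointness.
  have hdisjU : (↑(Finset.univ.filter
      (fun fg : ({a // a ∈ Am} → {b // b ∈ B}) × ({b // b ∈ Bn} → {a // a ∈ A}) =>
        NowhereInverses Am Bn fg.1 fg.2)) :
      Set (({a // a ∈ Am} → {b // b ∈ B}) × ({b // b ∈ Bn} → {a // a ∈ A}))).PairwiseDisjoint
      (fun fg => Fintype.piFinset (edgeColours A B Am Bn k l fg)) := by
    intro fg₁ h₁ fg₂ h₂ hne12
    simp only [Finset.coe_filter, Set.mem_setOf_eq, Finset.mem_univ, true_and] at h₁ h₂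
    refine Finset.disjoint_left.2 fun c hc₁ hc₂ => hne12 ?_
    rw [Fintype.mem_piFinset] at hc₁ hc₂
    have hfacts₁ := edgeColours_facts A B Am Bn k l fg₁ h₁ c hc₁
    have hfacts₂ := edgeColours_facts A B Am Bn k l fg₂ h₂ c hc₂
    obtain ⟨f₁, g₁⟩ := fg₁
    obtain ⟨f₂, g₂⟩ := fg₂
    have hfeq : f₁ = f₂ := by
      funext u
      have hc1 : c (⟨u.1, hAm u.2⟩, f₁ u) =
          Sum.inr (Fin.castSucc (Fin.last l), false) :=
        (hfacts₁ ⟨u.1, hAm u.2⟩ (f₁ u)).1.2 ⟨u.2, rfl⟩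
      obtain ⟨h, he⟩ := (hfacts₂ ⟨u.1, hAm u.2⟩ (f₁ u)).1.1 hc1
      exact (Subtype.ext he.symm : f₁ u = f₂ ⟨u.1, h⟩)
    have hgeq : g₁ = g₂ := by
      funext v
      have hc2 : c (g₁ v, ⟨v.1, hBn v.2⟩) = Sum.inr (Fin.last (l + 1), true) :=
        (hfacts₁ (g₁ v) ⟨v.1, hBn v.2⟩).2.1.2 ⟨v.2, rfl⟩
      obtain ⟨h, he⟩ := (hfacts₂ (g₁ v) ⟨v.1, hBn v.2⟩).2.1.1 hc2
      exact (Subtype.ext he.symm : g₁ v = g₂ ⟨v.1, h⟩)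
    rw [hfeq, hgeq]
  rw [hset, Finset.sum_biUnion hdisjU]
  -- Step 3: evaluate the inner sum for each nowhere-inverse pair.
  have heval : ∀ fg ∈ Finset.univ.filter
      (fun fg : ({a // a ∈ Am} → {b // b ∈ B}) × ({b // b ∈ Bn} → {a // a ∈ A}) =>
        NowhereInverses Am Bn fg.1 fg.2),
      (∑ c ∈ Fintype.piFinset (edgeColours A B Am Bn k l fg),
        ∏ p : {a // a ∈ A} × {b // b ∈ B},
          Sum.elim w
            (fun qb => (Fin.snoc (Fin.snoc x y) z : Fin (l + 2) → ℚ) qb.1) (c p))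
      = y ^ m * z ^ n * (∑ p, w p + 2 * ∑ q, x q) ^ (M * N - m - n) := by
    intro fg hfg
    rw [Finset.mem_filter] at hfg
    have hni := hfg.2
    have hsumcol : ∀ p : {a // a ∈ A} × {b // b ∈ B},
        (∑ col ∈ edgeColours A B Am Bn k l fg p,
          Sum.elim w
            (fun qb => (Fin.snoc (Fin.snoc x y) z : Fin (l + 2) → ℚ) qb.1) col)
        = if ∃ h : p.1.1 ∈ Am, (fg.1 ⟨p.1.1, h⟩).1 = p.2.1 then y
          else if ∃ h : p.2.1 ∈ Bn, (fg.2 ⟨p.2.1, h⟩).1 = p.1.1 then z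
          else (∑ p', w p' + 2 * ∑ q, x q) := by
      intro p
      simp only [edgeColours]
      by_cases h1 : ∃ h : p.1.1 ∈ Am, (fg.1 ⟨p.1.1, h⟩).1 = p.2.1
      · rw [if_pos h1, if_pos h1, Finset.sum_singleton]
        simp [Fin.snoc_castSucc, Fin.snoc_last]
      · rw [if_neg h1, if_neg h1]
        by_cases h2 : ∃ h : p.2.1 ∈ Bn, (fg.2 ⟨p.2.1, h⟩).1 = p.1.1
        · rw [if_pos h2, if_pos h2, Finset.sum_singleton]
          simp [Fin.snoc_last]
        · rw [if_neg h2, if_neg h2]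
          rw [Finset.sum_image (fun s₁ _ s₂ _ hss => embedCol_inj k l hss)]
          rw [Fintype.sum_sum_type]
          simp only [embedCol, Sum.map_inl, Sum.map_inr, Sum.elim_inl, Sum.elim_inr,
            id_eq, Prod.map_fst, Fin.snoc_castSucc]
          rw [Fintype.sum_prod_type]
          congr 1
          rw [Finset.mul_sum]
          refine Finset.sum_congr rfl fun q' _ => ?_
          simp [Fintype.sum_bool, two_mul]
    calc (∑ c ∈ Fintype.piFinset (edgeColours A B Am Bn k l fg),
        ∏ p : {a // a ∈ A} × {b // b ∈ B},
          Sum.elim w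
            (fun qb => (Fin.snoc (Fin.snoc x y) z : Fin (l + 2) → ℚ) qb.1) (c p))
        = ∏ p : {a // a ∈ A} × {b // b ∈ B},
            ∑ col ∈ edgeColours A B Am Bn k l fg p,
              Sum.elim w
                (fun qb => (Fin.snoc (Fin.snoc x y) z : Fin (l + 2) → ℚ) qb.1) col :=
          (Finset.prod_univ_sum _ _).symm
      _ = ∏ p : {a // a ∈ A} × {b // b ∈ B},
            (if ∃ h : p.1.1 ∈ Am, (fg.1 ⟨p.1.1, h⟩).1 = p.2.1 then y
            else if ∃ h : p.2.1 ∈ Bn, (fg.2 ⟨p.2.1, h⟩).1 = p.1.1 then z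
            else (∑ p', w p' + 2 * ∑ q, x q)) :=
          Finset.prod_congr rfl fun p _ => hsumcol p
      _ = y ^ m * z ^ n * (∑ p, w p + 2 * ∑ q, x q) ^ (M * N - m - n) := by
          rw [Finset.prod_ite, Finset.prod_const, Finset.prod_ite, Finset.prod_const,
            Finset.prod_const]
          have hinj1 : Function.Injective
              (fun u : {a // a ∈ Am} =>
                ((⟨u.1, hAm u.2⟩ : {a // a ∈ A}), fg.1 u)) := by
            intro u₁ u₂ h
            exact Subtype.ext
              (by simpa using congrArg (fun q : _ × _ => (q.1.1 : α)) h)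
          have hinj2 : Function.Injective
              (fun v : {b // b ∈ Bn} =>
                (fg.2 v, (⟨v.1, hBn v.2⟩ : {b // b ∈ B}))) := by
            intro v₁ v₂ h
            exact Subtype.ext
              (by simpa using congrArg (fun q : _ × _ => (q.2.1 : α)) h)
          have hc1card : (univ.filter (fun p : {a // a ∈ A} × {b // b ∈ B} =>
              ∃ h : p.1.1 ∈ Am, (fg.1 ⟨p.1.1, h⟩).1 = p.2.1)).card = m := by
            have himg : univ.filter (fun p : {a // a ∈ A} × {b // b ∈ B} =>
                ∃ h : p.1.1 ∈ Am, (fg.1 ⟨p.1.1, h⟩).1 = p.2.1)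
                = Finset.univ.image (fun u : {a // a ∈ Am} =>
                    ((⟨u.1, hAm u.2⟩ : {a // a ∈ A}), fg.1 u)) := by
              ext p
              simp only [Finset.mem_filter, Finset.mem_univ, true_and, Finset.mem_image]
              constructor
              · rintro ⟨h, he⟩
                refine ⟨⟨p.1.1, h⟩, ?_⟩
                refine Prod.ext (Subtype.ext rfl) (Subtype.ext he)
              · rintro ⟨u, rfl⟩
                exact ⟨u.2, rfl⟩
            rw [himg, Finset.card_image_of_injective _ hinj1, Finset.card_univ,
              Fintype.card_coe, hm]
          have hfilter2 : (univ.filter (fun p : {a // a ∈ A} × {b // b ∈ B} =>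
                ¬ ∃ h : p.1.1 ∈ Am, (fg.1 ⟨p.1.1, h⟩).1 = p.2.1)).filter
                (fun p => ∃ h : p.2.1 ∈ Bn, (fg.2 ⟨p.2.1, h⟩).1 = p.1.1)
              = univ.filter (fun p : {a // a ∈ A} × {b // b ∈ B} =>
                  ∃ h : p.2.1 ∈ Bn, (fg.2 ⟨p.2.1, h⟩).1 = p.1.1) := by
            rw [Finset.filter_filter]
            refine Finset.filter_congr fun p _ => ?_
            constructor
            · exact And.right
            · intro h2
              exact ⟨fun h1 => nowhere_exclusive fg.1 fg.2 hni p.1 p.2 h1 h2, h2⟩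
          have hc2card : (univ.filter (fun p : {a // a ∈ A} × {b // b ∈ B} =>
              ∃ h : p.2.1 ∈ Bn, (fg.2 ⟨p.2.1, h⟩).1 = p.1.1)).card = n := by
            have himg : univ.filter (fun p : {a // a ∈ A} × {b // b ∈ B} =>
                ∃ h : p.2.1 ∈ Bn, (fg.2 ⟨p.2.1, h⟩).1 = p.1.1)
                = Finset.univ.image (fun v : {b // b ∈ Bn} =>
                    (fg.2 v, (⟨v.1, hBn v.2⟩ : {b // b ∈ B}))) := by
              ext p
              simp only [Finset.mem_filter, Finset.mem_univ, true_and, Finset.mem_image]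
              constructor
              · rintro ⟨h, he⟩
                refine ⟨⟨p.2.1, h⟩, ?_⟩
                refine Prod.ext (Subtype.ext he) (Subtype.ext rfl)
              · rintro ⟨v, rfl⟩
                exact ⟨v.2, rfl⟩
            rw [himg, Finset.card_image_of_injective _ hinj2, Finset.card_univ,
              Fintype.card_coe, hn]
          have htot : (univ : Finset ({a // a ∈ A} × {b // b ∈ B})).card = M * N := by
            rw [Finset.card_univ, Fintype.card_prod, Fintype.card_coe, Fintype.card_coe,
              hAcard, hBcard]
          have hsplit1 := Finset.card_filter_add_card_filter_not
            (s := (univ : Finset ({a // a ∈ A} × {b // b ∈ B})))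
            (p := fun p => ∃ h : p.1.1 ∈ Am, (fg.1 ⟨p.1.1, h⟩).1 = p.2.1)
          have hsplit2 := Finset.card_filter_add_card_filter_not
            (s := (univ.filter (fun p : {a // a ∈ A} × {b // b ∈ B} =>
              ¬ ∃ h : p.1.1 ∈ Am, (fg.1 ⟨p.1.1, h⟩).1 = p.2.1)))
            (p := fun p => ∃ h : p.2.1 ∈ Bn, (fg.2 ⟨p.2.1, h⟩).1 = p.1.1)
          rw [hfilter2, hc2card] at hsplit2
          rw [hc1card, htot] at hsplit1
          have hrest : ((univ.filter (fun p : {a // a ∈ A} × {b // b ∈ B} =>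
              ¬ ∃ h : p.1.1 ∈ Am, (fg.1 ⟨p.1.1, h⟩).1 = p.2.1)).filter
              (fun p => ¬ ∃ h : p.2.1 ∈ Bn, (fg.2 ⟨p.2.1, h⟩).1 = p.1.1)).card
              = M * N - m - n := by omega
          rw [hc1card, hfilter2, hc2card, hrest]
          ring
  rw [Finset.sum_congr rfl heval, Finset.sum_const, nsmul_eq_mul]
  rw [card_nowhereInverses A B Am Bn M N m n hAcard hBcard hAm hBn hm hn]
  rw [Lkl_eq_pow k l (M * N - m - n) w x]
  ring
end

section
/- Let X and C be types, τ : X → C a function, k ≤ ℓ natural numbers, and α : Fin ℓ → C. Suppose there exist pairwise distinct elements b₁,…,b_ℓ ∈ X with τ(bᵢ) = α(i) for all i ∈ Fin ℓ, and pairwise distinct elements a₁,…,a_k ∈ X with τ(aᵢ) = α(i) for all i ∈ Fin k. Then there exist pairwise distinct elements c₁,…,c_ℓ ∈ X with τ(cᵢ) = α(i) for all i ∈ Fin ℓ and cᵢ = aᵢ for all i ∈ Fin k (identifying Fin k with the initial segment of Fin ℓ). -/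
/-- If some tuple of pairwise distinct elements `b₁,…,b_ℓ` realizes the
prescribed "types" `α₁,…,α_ℓ` (via the type map `τ`), then any tuple of
pairwise distinct elements `a₁,…,a_k` realizing the prefix `α₁,…,α_k` extends
to a tuple of pairwise distinct elements `c₁,…,c_ℓ` realizing all of
`α₁,…,α_ℓ` with `cᵢ = aᵢ` for `i ≤ k`. -/
theorem extend_distinct_realization {X C : Type*} (τ : X → C) (k l : ℕ)
    (hkl : k ≤ l) (α : Fin l → C)
    (b : Fin l → X) (hb : Function.Injective b) (hbτ : ∀ i, τ (b i) = α i)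
    (a : Fin k → X) (ha : Function.Injective a)
    (haτ : ∀ i : Fin k, τ (a i) = α (Fin.castLE hkl i)) :
    ∃ c : Fin l → X, Function.Injective c ∧ (∀ i, τ (c i) = α i) ∧
      ∀ i : Fin k, c (Fin.castLE hkl i) = a i := by
  induction k with
  | zero => exact ⟨b, hb, hbτ, fun i => i.elim0⟩
  | succ n ih =>
    have hnl : n ≤ l := Nat.le_of_succ_le hkl
    obtain ⟨c, hc, hcτ, hca⟩ := ih hnl (a ∘ Fin.castSucc)
      (ha.comp (Fin.castSucc_injective n))
      (fun i => by
        have := haτ (Fin.castSucc i)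
        simpa [Fin.castLE] using this)
    set kidx : Fin l := ⟨n, hkl⟩ with hkidx
    set x : X := a (Fin.last n) with hx
    have hτx : τ x = α kidx := by
      have := haτ (Fin.last n)
      simpa [Fin.castLE, hkidx] using this
    have hprefix : ∀ i : Fin n, c (Fin.castLE hnl i) = a (Fin.castSucc i) :=
      fun i => hca i
    by_cases hjx : ∃ j, c j = x
    · obtain ⟨j, hj⟩ := hjx
      refine ⟨c ∘ Equiv.swap kidx j, hc.comp (Equiv.swap kidx j).injective, ?_, ?_⟩
      · intro i
        have hαj : α j = α kidx := by rw [← hcτ j, hj, hτx]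
        rcases eq_or_ne i kidx with rfl | hik
        · simp [Equiv.swap_apply_left, hj, hτx]
        rcases eq_or_ne i j with rfl | hij
        · simp [Equiv.swap_apply_right, hcτ, hαj]
        · simp [Equiv.swap_apply_of_ne_of_ne hik hij, hcτ]
      · intro i
        refine Fin.lastCases ?_ ?_ i
        · show c (Equiv.swap kidx j (Fin.castLE hkl (Fin.last n))) = a (Fin.last n)
          have : Fin.castLE hkl (Fin.last n) = kidx := rfl
          rw [this, Equiv.swap_apply_left, hj]
        · intro i
          show c (Equiv.swap kidx j (Fin.castLE hkl (Fin.castSucc i))) = a (Fin.castSucc i)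
          have h1 : Fin.castLE hkl (Fin.castSucc i) = Fin.castLE hnl i := rfl
          have h2 : Fin.castLE hnl i ≠ kidx := by
            intro h
            have := congrArg Fin.val h
            simp [hkidx] at this
            omega
          have h3 : Fin.castLE hnl i ≠ j := by
            intro h
            have hcx : c (Fin.castLE hnl i) = x := by rw [h, hj]
            rw [hprefix i] at hcx
            have := ha hcx
            exact absurd this (by simp [Fin.ext_iff]; omega)
          rw [h1, Equiv.swap_apply_of_ne_of_ne h2 h3]
          exact hprefix i
    · push_neg at hjx
      refine ⟨Function.update c kidx x, ?_, ?_, ?_⟩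
      · intro i i' h
        rcases eq_or_ne i kidx with rfl | hik <;> rcases eq_or_ne i' kidx with rfl | hik'
        · rfl
        · rw [Function.update_self, Function.update_of_ne hik'] at h
          exact absurd h.symm (hjx i')
        · rw [Function.update_self, Function.update_of_ne hik] at h
          exact absurd h (hjx i)
        · rw [Function.update_of_ne hik, Function.update_of_ne hik'] at h
          exact hc h
      · intro i
        rcases eq_or_ne i kidx with rfl | hik
        · simp [hτx]
        · simp [Function.update_of_ne hik, hcτ]
      · intro i
        refine Fin.lastCases ?_ ?_ i
        · show Function.update c kidx x (Fin.castLE hkl (Fin.last n)) = a (Fin.last n)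
          have : Fin.castLE hkl (Fin.last n) = kidx := rfl
          rw [this, Function.update_self]
        · intro i
          have h2 : Fin.castLE hkl (Fin.castSucc i) ≠ kidx := by
            intro h
            have := congrArg Fin.val h
            simp [hkidx] at this
            omega
          rw [Function.update_of_ne h2]
          exact hprefix i
end
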